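/- arXiv:2103.00551 — 2 statements merged into one kernel-verified Lean document; each statement's English description precedes it below -/
import Mathlib

section
/- Let u, b : ℝ² → ℝ² and π : ℝ² → ℝ be smooth functions satisfying the momentum equation -Δu + (u·∇)u + ∇π = (b·∇)b pointwise on ℝ², and suppose curl b = u·b⊥ everywhere, where u·b⊥ = u₁b₂ - u₂b₁. Then, with Q := |u|²/2 + π - |b|²/2, the pointwise identity |∇u|² + (curl b)² = Δ(|u|²/2) - u·∇Q holds on ℝ². -/
open MeasureTheory Metric

noncomputable section

abbrev E2 : Type := EuclideanSpace ℝ (Fin 2)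

/-- Partial derivative `∂ᵢ f` of a scalar function on `ℝ²`. -/
def pd (f : E2 → ℝ) (i : Fin 2) (x : E2) : ℝ :=
  fderiv ℝ f x (EuclideanSpace.single i 1)

/-- Partial derivative `∂ᵢ uⱼ` of a vector field on `ℝ²`. -/
def pdv (u : E2 → E2) (i j : Fin 2) (x : E2) : ℝ :=
  pd (fun y => u y j) i x

/-- Laplacian of a scalar function on `ℝ²`. -/
def lap (f : E2 → ℝ) (x : E2) : ℝ :=
  pd (pd f 0) 0 x + pd (pd f 1) 1 x

/-- `|∇f|²` for a scalar function. -/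
def gradSq (f : E2 → ℝ) (x : E2) : ℝ := (pd f 0 x)^2 + (pd f 1 x)^2

/-- `|∇u|²` for a vector field: sum of squares of all first-order partials. -/
def gradSqV (u : E2 → E2) (x : E2) : ℝ := ∑ i, ∑ j, (pdv u i j x)^2

/-- Drift term `u·∇f`. -/
def advect (u : E2 → E2) (f : E2 → ℝ) (x : E2) : ℝ :=
  u x 0 * pd f 0 x + u x 1 * pd f 1 x

end

/-!
Dot the momentum equation with `u`. Since `Δ(|u|²/2) = |∇u|² + u·Δu` and
`u·∇(|u|²/2) = u·(u·∇)u`, the right-hand side `Δ(|u|²/2) - u·∇Q` equals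
`|∇u|² + u·∇(|b|²/2) - u·(b·∇)b`.
In two dimensions `(b·∇)b = ∇(|b|²/2) - (curl b) b⊥`, so the last two terms are
`(u·b⊥) curl b`, which is `(curl b)²` by the constraint on `curl b`.
-/

section PartialDerivatives

variable {f g : E2 → ℝ} {i : Fin 2} {x : E2}

lemma pd_add (hf : DifferentiableAt ℝ f x) (hg : DifferentiableAt ℝ g x) :
    pd (fun y => f y + g y) i x = pd f i x + pd g i x := by
  simp [pd, fderiv_fun_add hf hg]

lemma pd_sub (hf : DifferentiableAt ℝ f x) (hg : DifferentiableAt ℝ g x) :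
    pd (fun y => f y - g y) i x = pd f i x - pd g i x := by
  simp [pd, fderiv_fun_sub hf hg]

lemma pd_mul (hf : DifferentiableAt ℝ f x) (hg : DifferentiableAt ℝ g x) :
    pd (fun y => f y * g y) i x = f x * pd g i x + g x * pd f i x := by
  simp [pd, fderiv_fun_mul hf hg]

lemma pd_sq_div_two (hf : DifferentiableAt ℝ f x) :
    pd (fun y => f y ^ 2 / 2) i x = f x * pd f i x := by
  simp only [pd, div_eq_mul_inv]
  rw [fderiv_mul_const (c := fun y => f y ^ 2) (hf.fun_pow 2), fderiv_fun_pow 2 hf]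
  simp only [Nat.add_one_sub_one, pow_one, nsmul_eq_mul, Nat.cast_ofNat, smul_apply, smul_eq_mul]
  ring

lemma differentiable_pd {n : WithTop ℕ∞} (hf : ContDiff ℝ n f) (hn : 2 ≤ n) (i : Fin 2) :
    Differentiable ℝ (pd f i) :=
  ((hf.fderiv_right (m := 1) hn).clm_apply contDiff_const).differentiable one_ne_zero

lemma pd_pd_sq_div_two (hf : ContDiff ℝ 2 f) :
    pd (pd (fun y => f y ^ 2 / 2) i) i x = f x * pd (pd f i) i x + pd f i x ^ 2 := by
  have hdf : Differentiable ℝ f := hf.differentiable (by norm_num)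
  have hpd : pd (fun y => f y ^ 2 / 2) i = fun z => f z * pd f i z :=
    funext fun z => pd_sq_div_two (hdf z)
  rw [hpd, pd_mul (hdf x) (differentiable_pd hf le_rfl i x)]
  ring

lemma lap_add (hf : ContDiff ℝ 2 f) (hg : ContDiff ℝ 2 g) :
    lap (fun y => f y + g y) x = lap f x + lap g x := by
  have hpd (i : Fin 2) : pd (fun y => f y + g y) i = fun z => pd f i z + pd g i z :=
    funext fun z => pd_add (hf.differentiable (by norm_num) z) (hg.differentiable (by norm_num) z)
  simp only [lap, hpd, pd_add (differentiable_pd hf le_rfl _ x) (differentiable_pd hg le_rfl _ x)]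
  ring

lemma lap_sq_div_two (hf : ContDiff ℝ 2 f) :
    lap (fun y => f y ^ 2 / 2) x = f x * lap f x + gradSq f x := by
  simp only [lap, gradSq, pd_pd_sq_div_two hf]
  ring

end PartialDerivatives

section Advection

variable {w : E2 → E2} {f g : E2 → ℝ} {x : E2}

lemma advect_add (hf : DifferentiableAt ℝ f x) (hg : DifferentiableAt ℝ g x) :
    advect w (fun y => f y + g y) x = advect w f x + advect w g x := by
  simp only [advect, pd_add hf hg]
  ring

lemma advect_sub (hf : DifferentiableAt ℝ f x) (hg : DifferentiableAt ℝ g x) :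
    advect w (fun y => f y - g y) x = advect w f x - advect w g x := by
  simp only [advect, pd_sub hf hg]
  ring

lemma advect_sq_div_two (hf : DifferentiableAt ℝ f x) :
    advect w (fun y => f y ^ 2 / 2) x = f x * advect w f x := by
  simp only [advect, pd_sq_div_two hf]
  ring

end Advection

section VectorFields

variable {v : E2 → E2} {x : E2}

lemma half_sq_norm_eq :
    (fun y => ((v y 0) ^ 2 + (v y 1) ^ 2) / 2) = fun y => (v y 0) ^ 2 / 2 + (v y 1) ^ 2 / 2 := by
  funext y
  ring

lemma lap_half_sq_norm (hv : ContDiff ℝ 2 v) :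
    lap (fun y => ((v y 0) ^ 2 + (v y 1) ^ 2) / 2) x
      = gradSqV v x + (v x 0 * lap (fun y => v y 0) x + v x 1 * lap (fun y => v y 1) x) := by
  have hc (j : Fin 2) : ContDiff ℝ 2 (fun y => v y j) := (contDiff_piLp 2).mp hv j
  rw [half_sq_norm_eq,
    lap_add ((hc 0).pow 2 |>.div_const (2 : ℝ)) ((hc 1).pow 2 |>.div_const (2 : ℝ)),
    lap_sq_div_two (hc 0), lap_sq_div_two (hc 1)]
  simp only [gradSqV, gradSq, pdv, Fin.sum_univ_two]
  ring

lemma advect_half_sq_norm (w : E2 → E2) (hv : DifferentiableAt ℝ v x) :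
    advect w (fun y => ((v y 0) ^ 2 + (v y 1) ^ 2) / 2) x
      = v x 0 * advect w (fun y => v y 0) x + v x 1 * advect w (fun y => v y 1) x := by
  have hc (j : Fin 2) : DifferentiableAt ℝ (fun y => v y j) x := (differentiableAt_piLp 2).mp hv j
  rw [half_sq_norm_eq, advect_add (by fun_prop) (by fun_prop),
    advect_sq_div_two (hc 0), advect_sq_div_two (hc 1)]

end VectorFields

/-- The two-dimensional Lamb identity `(b·∇)b = ∇(|b|²/2) - (curl b) b⊥`, dotted with `u`.
-/
lemma dot_advect_self_eq (u b : E2 → E2) (x : E2) :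
    u x 0 * advect b (fun y => b y 0) x + u x 1 * advect b (fun y => b y 1) x
      = b x 0 * advect u (fun y => b y 0) x + b x 1 * advect u (fun y => b y 1) x
        - (u x 0 * b x 1 - u x 1 * b x 0) * (pdv b 0 1 x - pdv b 1 0 x) := by
  simp only [advect, pdv]
  ring

/-- If `-Δu + (u·∇)u + ∇π = (b·∇)b` and `curl b = u·b⊥` hold pointwise on
`ℝ²`, then with `Q := |u|²/2 + π − |b|²/2` one has the pointwise identity
`|∇u|² + (curl b)² = Δ(|u|²/2) − u·∇Q`. -/
theorem energy_identity (u b : E2 → E2) (π : E2 → ℝ)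
    (hu : ContDiff ℝ (⊤ : ℕ∞) u) (hb : ContDiff ℝ (⊤ : ℕ∞) b)
    (hπ : ContDiff ℝ (⊤ : ℕ∞) π)
    (hmom : ∀ x : E2, ∀ j : Fin 2,
      -(lap (fun y => u y j) x) + advect u (fun y => u y j) x + pd π j x
        = advect b (fun y => b y j) x)
    (hcurl : ∀ x : E2, pdv b 0 1 x - pdv b 1 0 x = u x 0 * b x 1 - u x 1 * b x 0) :
    ∀ x : E2,
      gradSqV u x + (pdv b 0 1 x - pdv b 1 0 x) ^ 2 =
        lap (fun y => ((u y 0) ^ 2 + (u y 1) ^ 2) / 2) x -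
          advect u
            (fun y => ((u y 0) ^ 2 + (u y 1) ^ 2) / 2 + π y
              - ((b y 0) ^ 2 + (b y 1) ^ 2) / 2) x := by
  intro x
  have hu2 : ContDiff ℝ 2 u := hu.of_le (by norm_cast)
  have hux : DifferentiableAt ℝ u x := hu2.differentiable (by norm_num) x
  have hbx : DifferentiableAt ℝ b x := hb.differentiable (by norm_cast) x
  have hπx : DifferentiableAt ℝ π x := hπ.differentiable (by norm_cast) x
  have hadvect : advect u (fun y => ((u y 0) ^ 2 + (u y 1) ^ 2) / 2 + π y
        - ((b y 0) ^ 2 + (b y 1) ^ 2) / 2) x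
      = u x 0 * advect u (fun y => u y 0) x + u x 1 * advect u (fun y => u y 1) x
        + (u x 0 * pd π 0 x + u x 1 * pd π 1 x)
        - (b x 0 * advect u (fun y => b y 0) x + b x 1 * advect u (fun y => b y 1) x) := by
    rw [advect_sub (by fun_prop) (by fun_prop), advect_add (by fun_prop) hπx,
      advect_half_sq_norm u hux, advect_half_sq_norm u hbx]
    rfl
  rw [lap_half_sq_norm hu2, hadvect]
  linear_combination u x 0 * hmom x 0 + u x 1 * hmom x 1 + dot_advect_self_eq u b x
    + (pdv b 0 1 x - pdv b 1 0 x) * hcurl x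
end

section
/- Let u : ℝ² → ℝ² be a smooth vector field and ψ : ℝ² → ℝ a smooth function satisfying -Δψ + u·∇ψ = 0 pointwise on ℝ², with ∫_{ℝ²} |∇ψ|² dx < ∞. Then ψ is constant. -/
open MeasureTheory Metric

/-!
The operator `-Δ + u·∇` obeys the weak maximum principle: adding `ε exp (λ x₀)`, with `λ` above
the first component of `u`, turns a subsolution into a strict one, and a strict subsolution has
no interior maximum. So the oscillation of `ψ` over a disc is at most its oscillation over the
boundary circle. By Cauchy–Schwarz along the circle of radius `r`, that oscillation squared is at
most `2π r² ∫ |∇ψ(r, θ)|² dθ`, and averaging over `r ∈ (R, 2R)` in polar coordinates yields a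
circle on which this is at most `4π ∫_{R < |x| < 2R} |∇ψ|²`. As the Dirichlet integral is finite,
these annular energies tend to zero along `R = 2ⁿ`, hence `ψ x = ψ 0` for every `x`.
-/

open Real Filter Topology Function

section Calculus

variable {f g : E2 → ℝ}

lemma fderiv_apply_eq_pd (f : E2 → ℝ) (x v : E2) :
    fderiv ℝ f x v = v 0 * pd f 0 x + v 1 * pd f 1 x := by
  have hv : v = v 0 • EuclideanSpace.single 0 1 + v 1 • EuclideanSpace.single 1 1 := by
    ext j; fin_cases j <;> simp
  conv_lhs => rw [hv]
  simp [pd]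

lemma sq_fderiv_apply_le (f : E2 → ℝ) (x v : E2) :
    (fderiv ℝ f x v) ^ 2 ≤ ‖v‖ ^ 2 * gradSq f x := by
  rw [fderiv_apply_eq_pd, EuclideanSpace.real_norm_sq_eq, Fin.sum_univ_two, gradSq]
  nlinarith [sq_nonneg (v 0 * pd f 1 x - v 1 * pd f 0 x)]

lemma gradSq_nonneg (f : E2 → ℝ) (x : E2) : 0 ≤ gradSq f x := by
  unfold gradSq
  positivity

lemma contDiff_pd {n : WithTop ℕ∞} (hf : ContDiff ℝ (n + 1) f) (i : Fin 2) :
    ContDiff ℝ n (pd f i) :=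
  (hf.fderiv_right le_rfl).clm_apply contDiff_const

lemma continuous_gradSq (hf : ContDiff ℝ 1 f) : Continuous (gradSq f) := by
  have h0 := (contDiff_pd (n := 0) hf 0).continuous
  have h1 := (contDiff_pd (n := 0) hf 1).continuous
  unfold gradSq
  fun_prop

lemma pd_add_const_mul (hf : Differentiable ℝ f) (hg : Differentiable ℝ g) (c : ℝ) (i : Fin 2) :
    pd (fun y => f y + c * g y) i = fun x => pd f i x + c * pd g i x := by
  ext x
  simp [pd, fderiv_fun_add (hf x) ((hg x).const_mul c), fderiv_const_mul (hg x)]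

lemma pd_const_mul (hg : Differentiable ℝ g) (c : ℝ) (i : Fin 2) :
    pd (fun y => c * g y) i = fun x => c * pd g i x := by
  ext x
  simp [pd, fderiv_const_mul (hg x)]

lemma pd_neg (f : E2 → ℝ) (i : Fin 2) : pd (fun y => -f y) i = fun x => -pd f i x := by
  ext x
  simp [pd]

lemma lap_add_const_mul (hf : ContDiff ℝ 2 f) (hg : ContDiff ℝ 2 g) (c : ℝ) (x : E2) :
    lap (fun y => f y + c * g y) x = lap f x + c * lap g x := by
  have hpd : ∀ {h : E2 → ℝ}, ContDiff ℝ 2 h → ∀ i, Differentiable ℝ (pd h i) :=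
    fun hh i => (contDiff_pd (n := 1) hh i).differentiable one_ne_zero
  simp only [lap, pd_add_const_mul (hf.differentiable two_ne_zero) (hg.differentiable two_ne_zero),
    pd_add_const_mul (hpd hf _) (hpd hg _)]
  ring

lemma advect_add_const_mul (u : E2 → E2) (hf : Differentiable ℝ f) (hg : Differentiable ℝ g)
    (c : ℝ) (x : E2) :
    advect u (fun y => f y + c * g y) x = advect u f x + c * advect u g x := by
  simp only [advect, pd_add_const_mul hf hg]
  ring

lemma lap_neg (f : E2 → ℝ) (x : E2) : lap (fun y => -f y) x = -lap f x := by
  simp only [lap, pd_neg]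
  ring

lemma advect_neg (u : E2 → E2) (f : E2 → ℝ) (x : E2) :
    advect u (fun y => -f y) x = -advect u f x := by
  simp only [advect, pd_neg]
  ring

end Calculus

noncomputable def expWeight (lam : ℝ) (x : E2) : ℝ := exp (lam * x 0)

lemma contDiff_expWeight (lam : ℝ) : ContDiff ℝ 2 (expWeight lam) := by
  unfold expWeight
  fun_prop

lemma pd_expWeight (lam : ℝ) (i : Fin 2) :
    pd (expWeight lam) i = fun x => (if i = 0 then lam else 0) * expWeight lam x := by
  ext x
  have hlin : HasFDerivAt (fun y : E2 => lam * y 0) (lam • EuclideanSpace.proj (0 : Fin 2)) x :=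
    ((EuclideanSpace.proj (0 : Fin 2) : E2 →L[ℝ] ℝ).hasFDerivAt (x := x)).const_mul lam
  have hexp : HasFDerivAt (expWeight lam) _ x := (hasDerivAt_exp _).comp_hasFDerivAt x hlin
  rw [pd, hexp.fderiv]
  fin_cases i <;> simp [expWeight, mul_comm]

lemma drift_expWeight (u : E2 → E2) (lam : ℝ) (x : E2) :
    -(lap (expWeight lam) x) + advect u (expWeight lam) x
      = lam * (u x 0 - lam) * expWeight lam x := by
  simp only [lap, advect, pd_expWeight,
    pd_const_mul ((contDiff_expWeight lam).differentiable two_ne_zero)]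
  simp
  ring

theorem IsLocalMax.deriv_deriv_nonpos {f : ℝ → ℝ} {a : ℝ} (h : IsLocalMax f a)
    (hc : ContinuousAt f a) : deriv (deriv f) a ≤ 0 := by
  -- otherwise the second-derivative test makes `a` a local minimum too, so `f` is locally constant
  by_contra! hpos
  have hmin := isLocalMin_of_deriv_deriv_pos hpos h.deriv_eq_zero hc
  have hconst : f =ᶠ[𝓝 a] fun _ => f a := (hmin.and h).mono fun x hx => le_antisymm hx.2 hx.1
  have hderiv : deriv f =ᶠ[𝓝 a] fun _ => 0 :=
    hconst.eventuallyEq_nhds.mono fun x hx => by rw [hx.deriv_eq, deriv_const]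
  rw [hderiv.deriv_eq, deriv_const] at hpos
  exact hpos.false

theorem IsLocalMax.fderiv_fderiv_apply_nonpos {E : Type*} [NormedAddCommGroup E]
    [NormedSpace ℝ E] {φ : E → ℝ} {x : E} (h : IsLocalMax φ x) (v : E)
    (hφ : Differentiable ℝ φ) (hφ' : DifferentiableAt ℝ (fun y => fderiv ℝ φ y v) x) :
    fderiv ℝ (fun y => fderiv ℝ φ y v) x v ≤ 0 := by
  have hline : ∀ t : ℝ, HasDerivAt (fun s : ℝ => x + s • v) v t := fun t => by
    simpa using ((hasDerivAt_id t).smul_const v).const_add x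
  have hderiv : deriv (fun t : ℝ => φ (x + t • v)) = fun t => fderiv ℝ φ (x + t • v) v :=
    funext fun t => ((hφ _).hasFDerivAt.comp_hasDerivAt t (hline t)).deriv
  have hderiv2 : deriv (fun t : ℝ => fderiv ℝ φ (x + t • v) v) 0
      = fderiv ℝ (fun y => fderiv ℝ φ y v) x v := by
    have hd : HasFDerivAt (fun y => fderiv ℝ φ y v) (fderiv ℝ (fun y => fderiv ℝ φ y v) x)
        (x + (0 : ℝ) • v) := by simpa using hφ'.hasFDerivAt
    exact (hd.comp_hasDerivAt 0 (hline 0)).deriv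
  have hmax : IsLocalMax (fun t : ℝ => φ (x + t • v)) 0 :=
    IsLocalMax.comp_continuous (by simpa using h) (by fun_prop)
  rw [← hderiv2, ← hderiv]
  exact hmax.deriv_deriv_nonpos (hφ.continuous.comp (by fun_prop)).continuousAt

theorem not_isLocalMax_of_drift_neg {u : E2 → E2} {φ : E2 → ℝ} (hφ : ContDiff ℝ 2 φ) {x : E2}
    (hneg : -(lap φ x) + advect u φ x < 0) : ¬IsLocalMax φ x := by
  intro h
  have hgrad : ∀ i, pd φ i x = 0 := fun i => by simp [pd, h.fderiv_eq_zero]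
  have hpd : ∀ i, pd (pd φ i) i x ≤ 0 := fun i =>
    h.fderiv_fderiv_apply_nonpos _ (hφ.differentiable two_ne_zero)
      ((contDiff_pd (n := 1) hφ i).differentiable one_ne_zero x)
  have h0 := hpd 0
  have h1 := hpd 1
  simp only [lap, advect, hgrad] at hneg
  linarith

section MaximumPrinciple

variable {u : E2 → E2} {ψ : E2 → ℝ} {K : Set E2}

theorem le_of_isMaxOn_frontier (hK : IsCompact K) (hu : ContinuousOn (fun y => u y 0) K)
    (hψ : ContDiff ℝ 2 ψ) (hsub : ∀ y ∈ interior K, -(lap ψ y) + advect u ψ y ≤ 0)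
    {p x : E2} (hp : IsMaxOn ψ (frontier K) p) (hx : x ∈ K) : ψ x ≤ ψ p := by
  obtain ⟨M, hM⟩ := hK.bddAbove_image hu
  set lam := max M 0 + 1
  have hlam : ∀ y ∈ K, u y 0 < lam := fun y hy =>
    (hM ⟨y, hy, rfl⟩).trans_lt ((le_max_left M 0).trans_lt (lt_add_one _))
  obtain ⟨W, hW⟩ := hK.bddAbove_image (contDiff_expWeight lam).continuous.continuousOn
  have hW0 : 0 < W := (exp_pos _).trans_le (hW ⟨x, hx, rfl⟩)
  -- `ψ + ε · expWeight λ` is a strict subsolution, so its maximum over `K` lies on the frontier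
  have hperturbed : ∀ ε > 0, ψ x ≤ ψ p + ε * W := by
    intro ε hε
    set φ : E2 → ℝ := fun y => ψ y + ε * expWeight lam y
    have hφ : ContDiff ℝ 2 φ := hψ.add (contDiff_const.mul (contDiff_expWeight lam))
    obtain ⟨z, hzK, hzmax⟩ := hK.exists_isMaxOn ⟨x, hx⟩ hφ.continuous.continuousOn
    have hz : z ∈ frontier K := by
      refine ⟨subset_closure hzK, fun hint => not_isLocalMax_of_drift_neg (u := u) hφ ?_
        (hzmax.isLocalMax (mem_interior_iff_mem_nhds.1 hint))⟩
      rw [lap_add_const_mul hψ (contDiff_expWeight lam), advect_add_const_mul u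
        (hψ.differentiable two_ne_zero) ((contDiff_expWeight lam).differentiable two_ne_zero)]
      have hneg : -(lap (expWeight lam) z) + advect u (expWeight lam) z < 0 := by
        rw [drift_expWeight]
        exact mul_neg_of_neg_of_pos (mul_neg_of_pos_of_neg (by positivity)
          (by linarith [hlam z hzK])) (exp_pos _)
      linarith [hsub z hint, mul_neg_of_pos_of_neg hε hneg]
    calc ψ x ≤ φ x := le_add_of_nonneg_right (mul_nonneg hε.le (exp_pos _).le)
      _ ≤ φ z := hzmax hx
      _ ≤ ψ p + ε * W := add_le_add (hp hz) (by gcongr; exact hW ⟨z, hzK, rfl⟩)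
  refine le_of_forall_pos_le_add fun δ hδ => ?_
  simpa [div_mul_cancel₀ δ hW0.ne'] using hperturbed (δ / W) (by positivity)

theorem ge_of_isMinOn_frontier (hK : IsCompact K) (hu : ContinuousOn (fun y => u y 0) K)
    (hψ : ContDiff ℝ 2 ψ) (hsuper : ∀ y ∈ interior K, 0 ≤ -(lap ψ y) + advect u ψ y)
    {q x : E2} (hq : IsMinOn ψ (frontier K) q) (hx : x ∈ K) : ψ q ≤ ψ x := by
  have hsub : ∀ y ∈ interior K, -(lap (fun z => -ψ z) y) + advect u (fun z => -ψ z) y ≤ 0 :=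
    fun y hy => by rw [lap_neg, advect_neg]; linarith [hsuper y hy]
  simpa using le_of_isMaxOn_frontier hK hu hψ.neg hsub hq.neg hx

end MaximumPrinciple

noncomputable def circlePt (r θ : ℝ) : E2 := !₂[r * cos θ, r * sin θ]

@[simp] lemma circlePt_zero (r θ : ℝ) : circlePt r θ 0 = r * cos θ := rfl

@[simp] lemma circlePt_one (r θ : ℝ) : circlePt r θ 1 = r * sin θ := rfl

lemma norm_circlePt {r : ℝ} (hr : 0 ≤ r) (θ : ℝ) : ‖circlePt r θ‖ = r := by
  rw [EuclideanSpace.norm_eq, Fin.sum_univ_two]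
  simp only [circlePt_zero, circlePt_one, Real.norm_eq_abs, sq_abs]
  rw [mul_pow, mul_pow, ← mul_add, cos_sq_add_sin_sq, mul_one, sqrt_sq hr]

lemma continuous_circlePt : Continuous fun p : ℝ × ℝ => circlePt p.1 p.2 := by
  unfold circlePt
  fun_prop

lemma hasDerivAt_circlePt (r θ : ℝ) : HasDerivAt (circlePt r) (circlePt r (θ + π / 2)) θ := by
  have hcoord : HasDerivAt (fun t => ![r * cos t, r * sin t]) ![-(r * sin θ), r * cos θ] θ :=
    hasDerivAt_pi.2 fun i => by
      fin_cases i
      · simpa using (hasDerivAt_cos θ).const_mul r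
      · simpa using (hasDerivAt_sin θ).const_mul r
  have hv : circlePt r (θ + π / 2)
      = (EuclideanSpace.equiv (Fin 2) ℝ).symm ![-(r * sin θ), r * cos θ] := by
    ext i
    fin_cases i <;> simp [cos_add_pi_div_two, sin_add_pi_div_two]
  rw [hv]
  exact (EuclideanSpace.equiv (Fin 2) ℝ).symm.hasFDerivAt.comp_hasDerivAt θ hcoord

lemma exists_circlePt_eq {r : ℝ} {z : E2} (hz : ‖z‖ = r) :
    ∃ θ ∈ Set.Icc (-π) π, circlePt r θ = z := by
  set w : ℂ := ⟨z 0, z 1⟩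
  have hw : ‖w‖ = r := by
    rw [← hz, Complex.norm_def, Complex.normSq_mk, EuclideanSpace.norm_eq, Fin.sum_univ_two]
    simp only [Real.norm_eq_abs, sq_abs, ← sq]
  have hpolar := Complex.norm_mul_cos_add_sin_mul_I w
  rw [hw] at hpolar
  refine ⟨w.arg, ⟨(Complex.neg_pi_lt_arg w).le, Complex.arg_le_pi w⟩, ?_⟩
  ext i
  fin_cases i
  · simpa [← Complex.ofReal_cos, ← Complex.ofReal_sin] using congrArg Complex.re hpolar
  · simpa [← Complex.ofReal_cos, ← Complex.ofReal_sin] using congrArg Complex.im hpolar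

theorem sq_intervalIntegral_le {h : ℝ → ℝ} {a b : ℝ} (hab : a ≤ b)
    (hh : IntervalIntegrable h volume a b)
    (hh2 : IntervalIntegrable (fun t => h t ^ 2) volume a b) :
    (∫ t in a..b, h t) ^ 2 ≤ (b - a) * ∫ t in a..b, h t ^ 2 := by
  have hquad : ∀ c : ℝ,
      0 ≤ (b - a) * (c * c) + (-2 * ∫ t in a..b, h t) * c + ∫ t in a..b, h t ^ 2 := by
    intro c
    have hexpand : ∫ t in a..b, (h t - c) ^ 2
        = (b - a) * (c * c) + (-2 * ∫ t in a..b, h t) * c + ∫ t in a..b, h t ^ 2 := by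
      have hlin : IntervalIntegrable (fun t => 2 * h t * c) volume a b :=
        (hh.const_mul 2).mul_const c
      simp only [sub_sq, intervalIntegral.integral_add (hh2.sub hlin) intervalIntegrable_const,
        intervalIntegral.integral_sub hh2 hlin, intervalIntegral.integral_mul_const,
        intervalIntegral.integral_const_mul, intervalIntegral.integral_const, smul_eq_mul]
      ring
    exact hexpand ▸ intervalIntegral.integral_nonneg hab fun t _ => sq_nonneg _
  have := discrim_le_zero hquad
  unfold discrim at this
  linarith

theorem sq_sub_le_circleIntegral_gradSq {ψ : E2 → ℝ} (hψ : ContDiff ℝ 1 ψ) {r : ℝ} (hr : 0 ≤ r)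
    {p q : E2} (hp : ‖p‖ = r) (hq : ‖q‖ = r) :
    (ψ p - ψ q) ^ 2 ≤ 2 * π * r ^ 2 * ∫ θ in -π..π, gradSq ψ (circlePt r θ) := by
  obtain ⟨α, hα, rfl⟩ := exists_circlePt_eq hp
  obtain ⟨β, hβ, rfl⟩ := exists_circlePt_eq hq
  wlog hβα : β ≤ α generalizing α β
  · simpa only [← neg_sub (ψ (circlePt r α)), neg_sq] using this β hβ hq α hα hp (le_of_not_ge hβα)
  set G : ℝ → ℝ := fun θ => r ^ 2 * gradSq ψ (circlePt r θ)
  set dψ : ℝ → ℝ := fun θ => fderiv ℝ ψ (circlePt r θ) (circlePt r (θ + π / 2))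
  have hcirc : Continuous (circlePt r) :=
    continuous_circlePt.comp (continuous_const.prodMk continuous_id)
  have hdψ : Continuous dψ :=
    ((hψ.continuous_fderiv one_ne_zero).comp hcirc).clm_apply (hcirc.comp (by fun_prop))
  have hG : Continuous G := continuous_const.mul ((continuous_gradSq hψ).comp hcirc)
  have hG0 : ∀ θ, 0 ≤ G θ := fun θ => mul_nonneg (sq_nonneg r) (gradSq_nonneg ψ _)
  have hftc : ψ (circlePt r α) - ψ (circlePt r β) = ∫ θ in β..α, dψ θ :=
    (intervalIntegral.integral_eq_sub_of_hasDerivAt (fun θ _ =>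
      (hψ.differentiable one_ne_zero _).hasFDerivAt.comp_hasDerivAt θ (hasDerivAt_circlePt r θ))
      (hdψ.intervalIntegrable _ _)).symm
  have hdψ_sq : ∀ θ, dψ θ ^ 2 ≤ G θ := fun θ => by
    simpa [G, norm_circlePt hr] using sq_fderiv_apply_le ψ (circlePt r θ) (circlePt r (θ + π / 2))
  calc (ψ (circlePt r α) - ψ (circlePt r β)) ^ 2
      ≤ (α - β) * ∫ θ in β..α, dψ θ ^ 2 := hftc ▸ sq_intervalIntegral_le hβα
        (hdψ.intervalIntegrable _ _) ((hdψ.pow 2).intervalIntegrable _ _)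
    _ ≤ 2 * π * ∫ θ in β..α, G θ := by
        refine mul_le_mul (by linarith [hα.2, hβ.1]) (intervalIntegral.integral_mono_on hβα
          ((hdψ.pow 2).intervalIntegrable _ _) (hG.intervalIntegrable _ _) fun θ _ => hdψ_sq θ)
          (intervalIntegral.integral_nonneg hβα fun θ _ => sq_nonneg _) (by positivity)
    _ ≤ 2 * π * ∫ θ in -π..π, G θ := by
        gcongr
        exact intervalIntegral.integral_mono_interval hβ.1 hβα hα.2 (ae_of_all _ hG0)
          (hG.intervalIntegrable _ _)
    _ = 2 * π * r ^ 2 * ∫ θ in -π..π, gradSq ψ (circlePt r θ) := by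
        rw [intervalIntegral.integral_const_mul]
        ring

noncomputable def measurableEquivE2 : (ℝ × ℝ) ≃ᵐ E2 :=
  MeasurableEquiv.finTwoArrow.symm.trans (MeasurableEquiv.toLp 2 (Fin 2 → ℝ))

lemma measurePreserving_measurableEquivE2 : MeasurePreserving measurableEquivE2 :=
  (PiLp.volume_preserving_toLp (Fin 2)).comp (volume_preserving_finTwoArrow ℝ).symm

lemma measurableEquivE2_polarCoord_symm (p : ℝ × ℝ) :
    measurableEquivE2 (polarCoord.symm p) = circlePt p.1 p.2 := rfl

def annulus {E : Type*} [Norm E] (a b : ℝ) : Set E := {x | ‖x‖ ∈ Set.Ioo a b}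

lemma measurableSet_annulus (a b : ℝ) : MeasurableSet (annulus a b : Set E2) :=
  measurableSet_Ioo.preimage continuous_norm.measurable

theorem setIntegral_annulus_eq {G : E2 → ℝ} (hG : Continuous G) {a b : ℝ} (ha : 0 ≤ a) :
    ∫ x in annulus a b, G x = ∫ r in Set.Ioo a b, r * ∫ θ in -π..π, G (circlePt r θ) := by
  set F : ℝ × ℝ → ℝ := fun p => p.1 * G (circlePt p.1 p.2)
  have hF : IntegrableOn F (Set.Ioo a b ×ˢ Set.Ioo (-π) π) :=
    ((continuous_fst.mul (hG.comp continuous_circlePt)).continuousOn.integrableOn_compact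
      (isCompact_Icc.prod isCompact_Icc)).mono_set
      (Set.prod_mono Set.Ioo_subset_Icc_self Set.Ioo_subset_Icc_self)
  have hpolar : ∀ p ∈ polarCoord.target,
      p.1 • (annulus a b).indicator G (measurableEquivE2 (polarCoord.symm p))
        = (Set.Ioo a b ×ˢ Set.univ).indicator F p := by
    rintro ⟨r, θ⟩ ⟨hr, -⟩
    simp only [measurableEquivE2_polarCoord_symm, Set.indicator, annulus, Set.mem_ofPred_eq,
      norm_circlePt (le_of_lt hr), Set.mem_prod, Set.mem_univ, and_true, smul_eq_mul, F]
    split_ifs <;> simp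
  have htarget : polarCoord.target ∩ Set.Ioo a b ×ˢ Set.univ = Set.Ioo a b ×ˢ Set.Ioo (-π) π := by
    rw [polarCoord_target, Set.prod_inter_prod, Set.inter_univ,
      Set.inter_eq_right.2 (Set.Ioo_subset_Ioi_self.trans (Set.Ioi_subset_Ioi ha))]
  calc ∫ x in annulus a b, G x
      = ∫ p, (annulus a b).indicator G (measurableEquivE2 p) := by
        rw [measurePreserving_measurableEquivE2.integral_comp' (g := (annulus a b).indicator G),
          integral_indicator (measurableSet_annulus a b)]
    _ = ∫ p in polarCoord.target, (Set.Ioo a b ×ˢ Set.univ).indicator F p := by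
        rw [← integral_comp_polarCoord_symm]
        exact setIntegral_congr_fun polarCoord.open_target.measurableSet hpolar
    _ = ∫ p in Set.Ioo a b ×ˢ Set.Ioo (-π) π, F p := by
        rw [setIntegral_indicator (measurableSet_Ioo.prod MeasurableSet.univ), htarget]
    _ = ∫ r in Set.Ioo a b, r * ∫ θ in -π..π, G (circlePt r θ) := by
        rw [Measure.volume_eq_prod, setIntegral_prod F hF]
        refine setIntegral_congr_fun measurableSet_Ioo fun r _ => ?_
        rw [integral_const_mul, intervalIntegral.integral_of_le (by linarith [pi_pos]),
          integral_Ioc_eq_integral_Ioo]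

theorem exists_sq_mul_circleIntegral_le {G : E2 → ℝ} (hG : Continuous G) (hG0 : ∀ x, 0 ≤ G x)
    {a b : ℝ} (ha : 0 ≤ a) (hab : a < b) :
    ∃ r ∈ Set.Ioo a b,
      r ^ 2 * ∫ θ in -π..π, G (circlePt r θ) ≤ b / (b - a) * ∫ x in annulus a b, G x := by
  set g : ℝ → ℝ := fun r => ∫ θ in -π..π, G (circlePt r θ)
  have hg : Continuous g := intervalIntegral.continuous_parametric_intervalIntegral_of_continuous'
    (f := fun r θ => G (circlePt r θ)) (hG.comp continuous_circlePt) _ _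
  have hg0 : ∀ r, 0 ≤ g r := fun r =>
    intervalIntegral.integral_nonneg (by linarith [pi_pos]) fun θ _ => hG0 _
  have hvol : volume (Set.Ioo a b) = ENNReal.ofReal (b - a) := Real.volume_Ioo
  have hint : ∀ c : ℝ → ℝ, Continuous c → IntegrableOn c (Set.Ioo a b) := fun c hc =>
    hc.integrableOn_Icc.mono_set Set.Ioo_subset_Icc_self
  obtain ⟨r, hr, hle⟩ := exists_le_setAverage (μ := volume) (s := Set.Ioo a b)
    (f := fun r => r ^ 2 * g r) (by simp [hvol, hab]) (by simp [hvol]) (hint _ (by fun_prop))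
  refine ⟨r, hr, hle.trans ?_⟩
  calc ⨍ s in Set.Ioo a b, s ^ 2 * g s = (b - a)⁻¹ * ∫ s in Set.Ioo a b, s ^ 2 * g s := by
        rw [setAverage_eq, smul_eq_mul, measureReal_def, hvol,
          ENNReal.toReal_ofReal (sub_nonneg.2 hab.le)]
    _ ≤ (b - a)⁻¹ * ∫ s in Set.Ioo a b, b * (s * g s) := by
        refine mul_le_mul_of_nonneg_left (setIntegral_mono_on (hint _ (by fun_prop))
          (hint _ (by fun_prop)) measurableSet_Ioo fun s hs => ?_) (inv_nonneg.2 (by linarith))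
        nlinarith [mul_nonneg (sub_nonneg.2 hs.2.le) (mul_nonneg (ha.trans_lt hs.1).le (hg0 s))]
    _ = b / (b - a) * ∫ x in annulus a b, G x := by
        rw [setIntegral_annulus_eq hG ha, integral_const_mul]
        ring

lemma pairwise_disjoint_annulus {E : Type*} [Norm E] {c : ℕ → ℝ} (hc : Monotone c) :
    Pairwise (Disjoint on fun n => (annulus (c n) (c (n + 1)) : Set E)) := by
  intro m n hmn
  wlog hlt : m < n generalizing m n
  · exact (this hmn.symm (lt_of_le_of_ne (not_lt.1 hlt) hmn.symm)).symm
  exact Set.disjoint_left.2 fun x hxm hxn =>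
    (hxm.2.trans_le (hc (Nat.succ_le_of_lt hlt))).not_gt hxn.1

theorem sq_sub_le_annulusIntegral_gradSq {u : E2 → E2} {ψ : E2 → ℝ}
    (hu : Continuous fun y => u y 0) (hψ : ContDiff ℝ 2 ψ)
    (heq : ∀ x, -(lap ψ x) + advect u ψ x = 0) {R : ℝ} (hR : 0 < R) {x y : E2}
    (hx : ‖x‖ ≤ R) (hy : ‖y‖ ≤ R) :
    (ψ x - ψ y) ^ 2 ≤ 4 * π * ∫ z in annulus R (2 * R), gradSq ψ z := by
  have hψ1 : ContDiff ℝ 1 ψ := hψ.of_le one_le_two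
  obtain ⟨r, hr, hgood⟩ := exists_sq_mul_circleIntegral_le (continuous_gradSq hψ1)
    (gradSq_nonneg ψ) hR.le (by linarith : R < 2 * R)
  have hr0 : 0 < r := hR.trans hr.1
  have hK : IsCompact (closedBall (0 : E2) r) := isCompact_closedBall 0 r
  have hfrontier : frontier (closedBall (0 : E2) r) = sphere 0 r := frontier_closedBall 0 hr0.ne'
  have hsphere : (sphere (0 : E2) r).Nonempty := NormedSpace.sphere_nonempty.2 hr0.le
  obtain ⟨p, hp, hpmax⟩ :=
    (isCompact_sphere (0 : E2) r).exists_isMaxOn hsphere hψ.continuous.continuousOn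
  obtain ⟨q, hq, hqmin⟩ :=
    (isCompact_sphere (0 : E2) r).exists_isMinOn hsphere hψ.continuous.continuousOn
  have hmem : ∀ z : E2, ‖z‖ ≤ R → z ∈ closedBall (0 : E2) r := fun z hz =>
    mem_closedBall_zero_iff.2 (hz.trans hr.1.le)
  have hupper : ∀ z : E2, ‖z‖ ≤ R → ψ z ≤ ψ p := fun z hz =>
    le_of_isMaxOn_frontier hK hu.continuousOn hψ (fun w _ => (heq w).le) (hfrontier ▸ hpmax)
      (hmem z hz)
  have hlower : ∀ z : E2, ‖z‖ ≤ R → ψ q ≤ ψ z := fun z hz =>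
    ge_of_isMinOn_frontier hK hu.continuousOn hψ (fun w _ => (heq w).ge) (hfrontier ▸ hqmin)
      (hmem z hz)
  calc (ψ x - ψ y) ^ 2 ≤ (ψ p - ψ q) ^ 2 := by
        apply sq_le_sq' <;> linarith [hupper x hx, hupper y hy, hlower x hx, hlower y hy]
    _ ≤ 2 * π * (r ^ 2 * ∫ θ in -π..π, gradSq ψ (circlePt r θ)) := by
        rw [← mul_assoc]
        exact sq_sub_le_circleIntegral_gradSq hψ1 hr0.le (mem_sphere_zero_iff_norm.1 hp)
          (mem_sphere_zero_iff_norm.1 hq)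
    _ ≤ 2 * π * (2 * R / (2 * R - R) * ∫ z in annulus R (2 * R), gradSq ψ z) := by gcongr
    _ = 4 * π * ∫ z in annulus R (2 * R), gradSq ψ z := by
        field_simp
        ring

/-- A solution of the drift-diffusion equation `-Δψ + u·∇ψ = 0` on `ℝ²` with
square-integrable gradient is constant. -/
theorem drift_diffusion_liouville (u : E2 → E2) (ψ : E2 → ℝ)
    (hu : ContDiff ℝ (⊤ : ℕ∞) u) (hψ : ContDiff ℝ (⊤ : ℕ∞) ψ)
    (heq : ∀ x : E2, -(lap ψ x) + advect u ψ x = 0)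
    (hdir : ∫⁻ x : E2, ENNReal.ofReal (gradSq ψ x) < ⊤) :
    ∃ a : ℝ, ∀ x : E2, ψ x = a := by
  have hψ2 : ContDiff ℝ 2 ψ := hψ.of_le (WithTop.coe_le_coe.2 le_top)
  have hu0 : Continuous fun y => u y 0 := by have := hu.continuous; fun_prop
  have hG : Continuous (gradSq ψ) := continuous_gradSq (hψ2.of_le one_le_two)
  have hint : Integrable (gradSq ψ) := (lintegral_ofReal_ne_top_iff_integrable
    hG.aestronglyMeasurable (ae_of_all _ (gradSq_nonneg ψ))).1 hdir.ne
  have htail :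
      Tendsto (fun n : ℕ => ∫ z in annulus (2 ^ n) (2 * 2 ^ n), gradSq ψ z) atTop (𝓝 0) := by
    have hsum := hasSum_integral_iUnion (fun n => measurableSet_annulus _ _)
      (pairwise_disjoint_annulus (E := E2) (pow_right_mono₀ one_le_two)) hint.integrableOn
    simpa only [pow_succ'] using hsum.summable.tendsto_atTop_zero
  refine ⟨ψ 0, fun x => ?_⟩
  have hbound : ∀ᶠ n : ℕ in atTop,
      (ψ x - ψ 0) ^ 2 ≤ 4 * π * ∫ z in annulus (2 ^ n) (2 * 2 ^ n), gradSq ψ z :=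
    ((tendsto_pow_atTop_atTop_of_one_lt one_lt_two).eventually_ge_atTop ‖x‖).mono fun n hn =>
      sq_sub_le_annulusIntegral_gradSq hu0 hψ2 heq (by positivity) hn (by simp)
  have hsq : (ψ x - ψ 0) ^ 2 ≤ 0 := ge_of_tendsto (by simpa using htail.const_mul (4 * π)) hbound
  exact sub_eq_zero.1 (pow_eq_zero_iff two_ne_zero |>.1 (le_antisymm hsq (sq_nonneg _)))
end
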